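/- With Y ~ N(μ̃, σ̃²), σ̃ > 0, c > 0, ε ∈ (0,1), and U_δ = (−∞,−δ−c) ∪ (δ+c,∞), define R_ε = inf{δ > 0 : P(Y ∈ U_δ) < ε}. Then R_ε = 0 if 1 − (1/2)(erf((c+μ̃)/(√2σ̃)) + erf((c−μ̃)/(√2σ̃))) ≤ ε, and otherwise R_ε is the unique δ* > 0 satisfying erf(((δ*+c)+μ̃)/(√2σ̃)) + erf(((δ*+c)−μ̃)/(√2σ̃)) = 2(1−ε). -/

import Mathlib

open MeasureTheory ProbabilityTheory Set
open scoped ENNReal NNReal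

/-- The Gauss error function `erf x = (2/√π) ∫₀ˣ e^{−t²} dt`. -/
noncomputable def erf (x : ℝ) : ℝ :=
  (2 / Real.sqrt Real.pi) * ∫ t in (0:ℝ)..x, Real.exp (-t ^ 2)

lemma expsq_cont : Continuous (fun t : ℝ => Real.exp (-t ^ 2)) := by continuity

lemma expsq_ii (a b : ℝ) : IntervalIntegrable (fun t : ℝ => Real.exp (-t ^ 2)) volume a b :=
  expsq_cont.intervalIntegrable a b

lemma erf_neg (x : ℝ) : erf (-x) = - erf x := by
  have h := intervalIntegral.integral_comp_neg (a := 0) (b := x)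
    (fun t : ℝ => Real.exp (-t ^ 2))
  simp only [neg_sq, neg_zero] at h
  -- h : ∫ t in 0..x, exp (-t^2) = ∫ t in -x..0, exp (-t^2)
  rw [intervalIntegral.integral_symm (a := 0) (b := -x)] at h
  -- h : ∫ t in 0..x = -∫ t in 0..-x
  unfold erf
  rw [show (∫ t in (0:ℝ)..(-x), Real.exp (-t ^ 2))
      = - ∫ t in (0:ℝ)..x, Real.exp (-t ^ 2) by linarith]
  ring

lemma erf_strictMono : StrictMono erf := by
  intro x y hxy
  unfold erf
  have h2 : (0:ℝ) < 2 / Real.sqrt Real.pi := by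
    have := Real.pi_pos; positivity
  apply mul_lt_mul_of_pos_left ?_ h2
  have hadd : (∫ t in (0:ℝ)..x, Real.exp (-t ^ 2)) + (∫ t in x..y, Real.exp (-t ^ 2))
      = ∫ t in (0:ℝ)..y, Real.exp (-t ^ 2) :=
    intervalIntegral.integral_add_adjacent_intervals (expsq_ii 0 x) (expsq_ii x y)
  have hpos : 0 < ∫ t in x..y, Real.exp (-t ^ 2) :=
    intervalIntegral.intervalIntegral_pos_of_pos (expsq_ii x y)
      (fun t => Real.exp_pos _) hxy
  linarith

lemma erf_continuous : Continuous erf :=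
  continuous_const.mul (intervalIntegral.continuous_primitive expsq_ii 0)

lemma erf_tendsto : Filter.Tendsto erf Filter.atTop (nhds 1) := by
  have hint : IntegrableOn (fun t : ℝ => Real.exp (-t ^ 2)) (Ioi 0) := by
    have h := (integrable_exp_neg_mul_sq (b := (1:ℝ)) one_pos).integrableOn (s := Ioi 0)
    simpa using h
  have h := MeasureTheory.intervalIntegral_tendsto_integral_Ioi 0 hint Filter.tendsto_id
  have hval : (∫ x in Ioi (0:ℝ), Real.exp (-x ^ 2)) = Real.sqrt Real.pi / 2 := by
    have h1 := integral_gaussian_Ioi (1:ℝ)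
    simpa using h1
  rw [hval] at h
  have h2 := h.const_mul (2 / Real.sqrt Real.pi)
  have hπ : Real.sqrt Real.pi ≠ 0 := by
    have := Real.pi_pos; positivity
  have : 2 / Real.sqrt Real.pi * (Real.sqrt Real.pi / 2) = 1 := by field_simp
  rw [this] at h2
  exact h2

lemma erf_le_one (x : ℝ) : erf x ≤ 1 :=
  ge_of_tendsto erf_tendsto <| (Filter.eventually_ge_atTop x).mono
    fun y hy => erf_strictMono.monotone hy

lemma erf_lt_one (x : ℝ) : erf x < 1 :=
  lt_of_lt_of_le (erf_strictMono (lt_add_one x)) (erf_le_one (x + 1))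

lemma interval_integral_gaussianPDFReal (μ σ : ℝ) (hσ : 0 < σ) (a b : ℝ) :
    (∫ x in a..b, gaussianPDFReal μ (Real.toNNReal (σ ^ 2)) x)
      = (1/2) * (erf ((b - μ) / (Real.sqrt 2 * σ)) - erf ((a - μ) / (Real.sqrt 2 * σ))) := by
  set s := Real.sqrt 2 * σ with hs
  have hs0 : 0 < s := by
    have : (0:ℝ) < Real.sqrt 2 := by positivity
    positivity
  have hs2 : s ^ 2 = 2 * σ ^ 2 := by
    rw [hs, mul_pow, Real.sq_sqrt (by norm_num : (0:ℝ) ≤ 2)]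
  have hcoe : ((Real.toNNReal (σ ^ 2)) : ℝ) = σ ^ 2 := Real.coe_toNNReal _ (by positivity)
  have hπ : (0:ℝ) < Real.sqrt Real.pi := by have := Real.pi_pos; positivity
  have hpdf : ∀ x, gaussianPDFReal μ (Real.toNNReal (σ ^ 2)) x
      = (Real.sqrt Real.pi * s)⁻¹ * Real.exp (-((x - μ) / s) ^ 2) := by
    intro x
    rw [gaussianPDFReal]
    congr 1
    · rw [hcoe]
      congr 1
      rw [show 2 * Real.pi * σ ^ 2 = Real.pi * (2 * σ ^ 2) by ring, ← hs2,
        Real.sqrt_mul Real.pi_pos.le, Real.sqrt_sq hs0.le]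
    · congr 1
      rw [hcoe, div_pow, ← hs2]
      field_simp
  simp only [hpdf]
  rw [intervalIntegral.integral_const_mul]
  have h1 : (∫ x in a..b, Real.exp (-((x - μ) / s) ^ 2))
      = ∫ x in (a - μ)..(b - μ), Real.exp (-(x / s) ^ 2) :=
    intervalIntegral.integral_comp_sub_right (fun x => Real.exp (-(x / s) ^ 2)) μ
  have h2 : (∫ x in (a - μ)..(b - μ), Real.exp (-(x / s) ^ 2))
      = s * ∫ x in ((a - μ) / s)..((b - μ) / s), Real.exp (-x ^ 2) := by
    have h := intervalIntegral.integral_comp_div (a := a - μ) (b := b - μ) (c := s)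
      (fun x => Real.exp (-x ^ 2)) hs0.ne'
    simpa [smul_eq_mul] using h
  have h3 : ∀ u : ℝ, (∫ x in (0:ℝ)..u, Real.exp (-x ^ 2)) = Real.sqrt Real.pi / 2 * erf u := by
    intro u
    rw [erf]
    have hπ' : Real.sqrt Real.pi ≠ 0 := hπ.ne'
    field_simp
  have h4 : (∫ x in ((a - μ) / s)..((b - μ) / s), Real.exp (-x ^ 2))
      = (∫ x in (0:ℝ)..((b - μ) / s), Real.exp (-x ^ 2))
        - ∫ x in (0:ℝ)..((a - μ) / s), Real.exp (-x ^ 2) :=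
    (intervalIntegral.integral_interval_sub_left (expsq_ii 0 _) (expsq_ii 0 _)).symm
  rw [h1, h2, h4, h3, h3]
  field_simp

lemma gauss_measure_U (μ σ c δ : ℝ) (hσ : 0 < σ) (hab : -δ - c ≤ δ + c) :
    (gaussianReal μ (Real.toNNReal (σ ^ 2)) (Iio (-δ - c) ∪ Ioi (δ + c))).toReal
      = 1 - (1/2) * (erf ((δ + c + μ) / (Real.sqrt 2 * σ))
          + erf ((δ + c - μ) / (Real.sqrt 2 * σ))) := by
  have hv : Real.toNNReal (σ ^ 2) ≠ 0 := by
    simp only [ne_eq, Real.toNNReal_eq_zero, not_le]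
    positivity
  have hset : Iio (-δ - c) ∪ Ioi (δ + c) = (Icc (-δ - c) (δ + c))ᶜ := by
    ext x
    simp only [mem_union, mem_Iio, mem_Ioi, mem_compl_iff, mem_Icc, not_and_or, not_le]
  rw [hset, prob_compl_eq_one_sub measurableSet_Icc,
    ENNReal.toReal_sub_of_le prob_le_one ENNReal.one_ne_top, ENNReal.toReal_one]
  have hIcc : (gaussianReal μ (Real.toNNReal (σ ^ 2)) (Icc (-δ - c) (δ + c))).toReal
      = ∫ x in (-δ - c)..(δ + c), gaussianPDFReal μ (Real.toNNReal (σ ^ 2)) x := by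
    rw [gaussianReal_apply_eq_integral _ hv, ENNReal.toReal_ofReal
      (setIntegral_nonneg measurableSet_Icc fun x _ => gaussianPDFReal_nonneg _ _ _)]
    rw [MeasureTheory.integral_Icc_eq_integral_Ioc, ← intervalIntegral.integral_of_le hab]
  rw [hIcc, interval_integral_gaussianPDFReal μ σ hσ]
  have hneg : (-δ - c - μ) / (Real.sqrt 2 * σ) = -((δ + c + μ) / (Real.sqrt 2 * σ)) := by
    ring
  rw [hneg, erf_neg]
  ring

/-- **Value-at-risk of cascading large fluctuation (Theorem 1).**
With `Y ~ N(μ̃, σ̃²)`, `σ̃ > 0`, `c > 0`, `ε ∈ (0,1)`, `U_δ = (−∞,−δ−c) ∪ (δ+c,∞)` and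
`R_ε = inf{δ > 0 : P(Y ∈ U_δ) < ε}`: either
`1 − ½(erf((c+μ̃)/(√2σ̃)) + erf((c−μ̃)/(√2σ̃))) ≤ ε` and then `R_ε = 0`, or otherwise
`R_ε` is the unique `δ* > 0` with
`erf(((δ*+c)+μ̃)/(√2σ̃)) + erf(((δ*+c)−μ̃)/(√2σ̃)) = 2(1−ε)`. -/
theorem value_at_risk_cascading_failure
    (μt σt c ε : ℝ) (hσt : 0 < σt) (hc : 0 < c) (hε : ε ∈ Ioo (0:ℝ) 1)
    (R : ℝ)
    (hR : R = sInf {δ : ℝ | 0 < δ ∧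
      gaussianReal μt (Real.toNNReal (σt ^ 2)) (Iio (-δ - c) ∪ Ioi (δ + c)) <
        ENNReal.ofReal ε}) :
    (1 - (1 / 2) * (erf ((c + μt) / (Real.sqrt 2 * σt)) +
        erf ((c - μt) / (Real.sqrt 2 * σt))) ≤ ε → R = 0) ∧
    (¬ (1 - (1 / 2) * (erf ((c + μt) / (Real.sqrt 2 * σt)) +
        erf ((c - μt) / (Real.sqrt 2 * σt))) ≤ ε) →
      (0 < R ∧
        erf (((R + c) + μt) / (Real.sqrt 2 * σt)) +
          erf (((R + c) - μt) / (Real.sqrt 2 * σt)) = 2 * (1 - ε) ∧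
        ∀ δ : ℝ, 0 < δ →
          erf (((δ + c) + μt) / (Real.sqrt 2 * σt)) +
            erf (((δ + c) - μt) / (Real.sqrt 2 * σt)) = 2 * (1 - ε) → δ = R)) := by
  obtain ⟨hε0, hε1⟩ := hε
  have hsqrt2 : (0:ℝ) < Real.sqrt 2 := Real.sqrt_pos.mpr (by norm_num)
  set s : ℝ := Real.sqrt 2 * σt with hsdef
  have hs0 : 0 < s := by positivity
  set gg : ℝ → ℝ := fun δ => erf ((δ + c + μt) / s) + erf ((δ + c - μt) / s) with hgg
  have hmono : StrictMono gg := by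
    intro x y hxy
    have h1 : (x + c + μt) / s < (y + c + μt) / s :=
      (div_lt_div_iff_of_pos_right hs0).mpr (by linarith)
    have h2 : (x + c - μt) / s < (y + c - μt) / s :=
      (div_lt_div_iff_of_pos_right hs0).mpr (by linarith)
    exact add_lt_add (erf_strictMono h1) (erf_strictMono h2)
  have hcont : Continuous gg := by
    apply Continuous.add <;> exact erf_continuous.comp (by fun_prop)
  have htend : Filter.Tendsto gg Filter.atTop (nhds 2) := by
    have ht : ∀ k : ℝ, Filter.Tendsto (fun δ : ℝ => (δ + k) / s) Filter.atTop Filter.atTop := by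
      intro k
      exact Filter.Tendsto.atTop_div_const hs0
        (Filter.tendsto_atTop_add_const_right _ _ Filter.tendsto_id)
    have h1 := (erf_tendsto.comp (ht (c + μt))).add (erf_tendsto.comp (ht (c - μt)))
    norm_num at h1
    convert h1 using 2 with δ
    simp only [hgg, Function.comp]
    ring_nf
  have hmem : ∀ δ : ℝ, 0 < δ →
      (gaussianReal μt (Real.toNNReal (σt ^ 2)) (Iio (-δ - c) ∪ Ioi (δ + c)) <
        ENNReal.ofReal ε ↔ 2 * (1 - ε) < gg δ) := by
    intro δ hδ
    rw [ENNReal.lt_ofReal_iff_toReal_lt (measure_ne_top _ _),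
      gauss_measure_U μt σt c δ hσt (by linarith)]
    simp only [hgg]
    constructor <;> intro h <;> linarith
  have hSeq : {δ : ℝ | 0 < δ ∧
      gaussianReal μt (Real.toNNReal (σt ^ 2)) (Iio (-δ - c) ∪ Ioi (δ + c)) <
        ENNReal.ofReal ε} = {δ : ℝ | 0 < δ ∧ 2 * (1 - ε) < gg δ} := by
    ext δ
    simp only [mem_setOf_eq]
    exact and_congr_right fun hδ => hmem δ hδ
  have hg0 : gg 0 = erf ((c + μt) / s) + erf ((c - μt) / s) := by
    simp only [hgg, zero_add]
  constructor
  · intro hle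
    have hle' : 2 * (1 - ε) ≤ gg 0 := by rw [hg0]; linarith
    have hset : {δ : ℝ | 0 < δ ∧
        gaussianReal μt (Real.toNNReal (σt ^ 2)) (Iio (-δ - c) ∪ Ioi (δ + c)) <
          ENNReal.ofReal ε} = Ioi 0 := by
      rw [hSeq]
      ext δ
      simp only [mem_setOf_eq, mem_Ioi]
      exact ⟨fun h => h.1, fun h => ⟨h, lt_of_le_of_lt hle' (hmono h)⟩⟩
    rw [hR, hset, csInf_Ioi]
  · intro hgt
    have hgt' : gg 0 < 2 * (1 - ε) := by rw [hg0]; linarith [not_le.mp hgt]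
    have h2 : 2 * (1 - ε) < 2 := by linarith
    obtain ⟨N, hN⟩ := (htend.eventually_const_lt h2).exists
    have hN0 : 0 < N := by
      by_contra h
      push_neg at h
      have := hmono.monotone h
      linarith
    obtain ⟨δs, hδs_mem, hδs⟩ :=
      intermediate_value_Icc hN0.le hcont.continuousOn ⟨by linarith, hN.le⟩
    have hδs0 : 0 < δs := hmono.lt_iff_lt.mp (by rw [hδs]; exact hgt')
    have hIoi : {δ : ℝ | 0 < δ ∧
        gaussianReal μt (Real.toNNReal (σt ^ 2)) (Iio (-δ - c) ∪ Ioi (δ + c)) <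
          ENNReal.ofReal ε} = Ioi δs := by
      rw [hSeq]
      ext δ
      simp only [mem_setOf_eq, mem_Ioi]
      constructor
      · rintro ⟨h1, h2'⟩
        exact hmono.lt_iff_lt.mp (by rw [hδs]; exact h2')
      · intro h
        exact ⟨hδs0.trans h, by rw [← hδs]; exact hmono h⟩
    have hRδ : R = δs := by rw [hR, hIoi, csInf_Ioi]
    refine ⟨hRδ ▸ hδs0, ?_, ?_⟩
    · show gg R = 2 * (1 - ε)
      rw [hRδ]; exact hδs
    · intro δ hδ0 hδeq
      have hδeq' : gg δ = gg δs := by rw [hδs]; exact hδeq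
      rw [hRδ]
      exact hmono.injective hδeq'
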